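/- Schwarz–Pick for the punctured disk: if f is holomorphic on the unit disk D with values in D∖{0}, then for every z ∈ D, exp(−ρ_D(z,0)) ≤ log(1/|f(z)|)/log(1/|f(0)|) ≤ exp(ρ_D(z,0)), i.e., ((1−|z|)/(1+|z|)) ≤ log(1/|f(z)|)/log(1/|f(0)|) ≤ ((1+|z|)/(1−|z|)). -/

import Mathlib

open Complex Metric Filter Topology InnerProductSpace

/-
On the circle of radius `R` about `c` the Poisson kernel of `w` lies between
`(R - ‖w - c‖) / (R + ‖w - c‖)` and its reciprocal. Integrating a harmonic function that is
nonnegative on the circle against it, and using the mean value property for `f c`, traps `f w`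
between the same multiples of `f c` (Harnack's inequality); letting `R` grow to the radius of an
open disk gives the bounds on the open disk. For holomorphic `f` with `0 < ‖f‖ < 1`,
`log (1 / ‖f‖) = -log ‖f‖` is a positive harmonic function, and Harnack's inequality on the unit
disk with `c = 0` is the claim.
-/

theorem poissonKernel_mem_Icc {R : ℝ} {c w z : ℂ} (hz : z ∈ sphere c R) (hw : w ∈ ball c R) :
    poissonKernel c w z ∈
      Set.Icc ((R - ‖w - c‖) / (R + ‖w - c‖)) ((R + ‖w - c‖) / (R - ‖w - c‖)) := by
  rw [poissonKernel_eq_re_herglotzRieszKernel]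
  exact ⟨le_re_herglotzRieszKernel hz hw, re_herglotzRieszKernel_le hz hw⟩

theorem InnerProductSpace.HarmonicOnNhd.harnack_closedBall {f : ℂ → ℝ} {c w : ℂ} {R : ℝ}
    (hf : HarmonicOnNhd f (closedBall c R)) (hf_nonneg : ∀ z ∈ sphere c R, 0 ≤ f z)
    (hw : w ∈ ball c R) :
    (R - ‖w - c‖) / (R + ‖w - c‖) * f c ≤ f w ∧ f w ≤ (R + ‖w - c‖) / (R - ‖w - c‖) * f c := by
  have hR : |R| = R := abs_of_pos (pos_of_mem_ball hw)
  have hmean : Real.circleAverage f c R = f c := by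
    rw [← hR] at hf
    exact hf.circleAverage_eq
  have hf_cont : ContinuousOn f (sphere c |R|) := by
    rw [hR]
    exact hf.continuousOn.mono sphere_subset_closedBall
  have hP_cont : ContinuousOn (poissonKernel c w) (sphere c |R|) := by
    rw [poissonKernel_eq_re_herglotzRieszKernel]
    exact continuous_re.comp_continuousOn (continuousOn_herglotzRieszKernel_sphere hw)
  have hf_int : CircleIntegrable f c R := hf_cont.circleIntegrable'
  have hPf_int : CircleIntegrable (poissonKernel c w • f) c R :=
    (hP_cont.smul hf_cont).circleIntegrable'
  have hP_bounds : ∀ z ∈ sphere c |R|, poissonKernel c w z ∈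
      Set.Icc ((R - ‖w - c‖) / (R + ‖w - c‖)) ((R + ‖w - c‖) / (R - ‖w - c‖)) ∧ 0 ≤ f z :=
    fun z hz => by rw [hR] at hz; exact ⟨poissonKernel_mem_Icc hz hw, hf_nonneg z hz⟩
  rw [← hmean, ← hf.circleAverage_poissonKernel_smul hw, ← smul_eq_mul, ← smul_eq_mul,
    ← Real.circleAverage_smul, ← Real.circleAverage_smul]
  constructor
  · refine Real.circleAverage_mono hf_int.const_smul hPf_int fun z hz => ?_
    exact mul_le_mul_of_nonneg_right (hP_bounds z hz).1.1 (hP_bounds z hz).2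
  · refine Real.circleAverage_mono hPf_int hf_int.const_smul fun z hz => ?_
    exact mul_le_mul_of_nonneg_right (hP_bounds z hz).1.2 (hP_bounds z hz).2

theorem InnerProductSpace.HarmonicOnNhd.harnack_ball {f : ℂ → ℝ} {c w : ℂ} {R : ℝ}
    (hf : HarmonicOnNhd f (ball c R)) (hf_nonneg : ∀ z ∈ ball c R, 0 ≤ f z)
    (hw : w ∈ ball c R) :
    (R - ‖w - c‖) / (R + ‖w - c‖) * f c ≤ f w ∧ f w ≤ (R + ‖w - c‖) / (R - ‖w - c‖) * f c := by
  have hwR : ‖w - c‖ < R := mem_ball_iff_norm.mp hw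
  have hr_mem : ∀ᶠ r in 𝓝[<] R, ‖w - c‖ < r ∧ r < R := Ioo_mem_nhdsLT hwR
  have harnack_r : ∀ᶠ r in 𝓝[<] R,
      (r - ‖w - c‖) / (r + ‖w - c‖) * f c ≤ f w ∧ f w ≤ (r + ‖w - c‖) / (r - ‖w - c‖) * f c :=
    hr_mem.mono fun r ⟨hwr, hrR⟩ => harnack_closedBall (hf.mono (closedBall_subset_ball hrR))
      (fun z hz => hf_nonneg z (sphere_subset_ball hrR hz)) (mem_ball_iff_norm.mpr hwr)
  constructor
  · have hcont : ContinuousAt (fun r => (r - ‖w - c‖) / (r + ‖w - c‖) * f c) R := by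
      have : R + ‖w - c‖ ≠ 0 := by linarith [norm_nonneg (w - c)]
      fun_prop (disch := assumption)
    exact le_of_tendsto hcont.continuousWithinAt.tendsto (harnack_r.mono fun _ h => h.1)
  · have hcont : ContinuousAt (fun r => (r + ‖w - c‖) / (r - ‖w - c‖) * f c) R := by
      have : R - ‖w - c‖ ≠ 0 := by linarith
      fun_prop (disch := assumption)
    exact ge_of_tendsto hcont.continuousWithinAt.tendsto (harnack_r.mono fun _ h => h.2)

theorem DifferentiableOn.harmonicOnNhd_log_norm {f : ℂ → ℂ} {U : Set ℂ}
    (hf : DifferentiableOn ℂ f U) (hU : IsOpen U) (hf_ne : ∀ z ∈ U, f z ≠ 0) :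
    HarmonicOnNhd (fun z => Real.log ‖f z‖) U :=
  fun z hz => (hf.analyticAt (hU.mem_nhds hz)).harmonicAt_log_norm (hf_ne z hz)

/-- Schwarz–Pick for the punctured disk: if `f : 𝔻 → 𝔻 ∖ {0}` is holomorphic then
`(1-|z|)/(1+|z|) ≤ log(1/|f z|)/log(1/|f 0|) ≤ (1+|z|)/(1-|z|)`. -/
theorem schwarz_pick_punctured_disk (f : ℂ → ℂ)
    (hf : DifferentiableOn ℂ f (ball 0 1))
    (hbd : ∀ z ∈ ball (0 : ℂ) 1, 0 < ‖f z‖ ∧ ‖f z‖ < 1) :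
    ∀ z ∈ ball (0 : ℂ) 1,
      (1 - ‖z‖) / (1 + ‖z‖) ≤ Real.log (1 / ‖f z‖) / Real.log (1 / ‖f 0‖) ∧
      Real.log (1 / ‖f z‖) / Real.log (1 / ‖f 0‖) ≤ (1 + ‖z‖) / (1 - ‖z‖) := by
  intro z hz
  have hu : HarmonicOnNhd (fun w => Real.log (1 / ‖f w‖)) (ball 0 1) := by
    simpa only [one_div, Real.log_inv, Pi.neg_def] using
      (hf.harmonicOnNhd_log_norm isOpen_ball fun w hw => norm_pos_iff.mp (hbd w hw).1).neg
  have hu_pos : ∀ w ∈ ball (0 : ℂ) 1, 0 < Real.log (1 / ‖f w‖) := fun w hw =>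
    Real.log_pos (one_lt_one_div (hbd w hw).1 (hbd w hw).2)
  obtain ⟨hlower, hupper⟩ := hu.harnack_ball (fun w hw => (hu_pos w hw).le) hz
  rw [sub_zero] at hlower hupper
  have hu0 := hu_pos 0 (mem_ball_self one_pos)
  exact ⟨(le_div_iff₀ hu0).mpr hlower, (div_le_iff₀ hu0).mpr hupper⟩
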